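/- Static Gradual Guarantee (Proposition 2): let e₁ and e₂ be closed GS expressions with e₁ ⊑ e₂ (e₁ is more precise than e₂ in the syntactic lifting of type precision to expressions). If ⊢ e₁ : T₁, then there exists T₂ such that ⊢ e₂ : T₂ and T₁ ⊑ T₂. -/

import Mathlib

open Classical

noncomputable section

namespace GS

/-! ## Base types, constants, primitive operations -/

/-- Base types. -/
inductive BaseTy where
  | real
  | bool
deriving DecidableEq

/-- Constants (literal values of base types). -/
inductive Const where
  | r : ℝ → Const
  | b : Bool → Const

/-- Primitive (binary) operations. -/
inductive Op where
  | add
  | mul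
  | le

/-! ## Gradual sensitivities: sensitivity intervals -/

/-- A gradual sensitivity: a valid interval `[lo,hi]` with `0 ≤ lo ≤ hi ≤ ∞`
over the extended nonnegative reals. The unknown sensitivity `?` is `[0,∞]`
and a fully precise sensitivity `s` is `[s,s]`. -/
structure SI where
  lo : ENNReal
  hi : ENNReal
  isle : lo ≤ hi

/-- Interval addition. -/
def SI.add (a b : SI) : SI := ⟨a.lo + b.lo, a.hi + b.hi, add_le_add a.isle b.isle⟩

/-- Interval multiplication. -/
def SI.mul (a b : SI) : SI := ⟨a.lo * b.lo, a.hi * b.hi, mul_le_mul' a.isle b.isle⟩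

/-- Interval join. -/
def SI.join (a b : SI) : SI := ⟨a.lo ⊔ b.lo, a.hi ⊔ b.hi, sup_le_sup a.isle b.isle⟩

/-- Precision on gradual sensitivities: interval inclusion. -/
def SI.prec (a b : SI) : Prop := b.lo ≤ a.lo ∧ a.hi ≤ b.hi

/-- Consistent sensitivity ordering: `[s₁,s₂] ⪅ [s₃,s₄]` iff `s₁ ≤ s₄`. -/
def SI.cle (a b : SI) : Prop := a.lo ≤ b.hi

/-- A gradual sensitivity is bounded if it does not contain ∞. -/
def SI.bounded (a : SI) : Prop := a.hi ≠ ⊤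

/-- A gradual sensitivity is static (fully precise) if it is a singleton. -/
def SI.static (a : SI) : Prop := a.lo = a.hi

/-- The zero sensitivity. -/
def SI.zero : SI := ⟨0, 0, le_rfl⟩

/-- The infinite sensitivity. -/
def SI.inf : SI := ⟨⊤, ⊤, le_rfl⟩

/-- The unknown sensitivity `? = [0,∞]`. -/
def SI.unknown : SI := ⟨0, ⊤, le_top⟩

/-! ## Gradual sensitivity environments -/

/-- A gradual sensitivity environment: a map from distance variables to
gradual sensitivities. -/
abbrev GEnv := String → SI

/-- Pointwise addition of sensitivity environments. -/
def addE (S1 S2 : GEnv) : GEnv := fun x => (S1 x).add (S2 x)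

/-- Scaling of a sensitivity environment by a gradual sensitivity. -/
def scaleE (g : SI) (S : GEnv) : GEnv := fun x => g.mul (S x)

/-- The empty sensitivity environment ∅. -/
def zeroE : GEnv := fun _ => SI.zero

/-- Pointwise precision of sensitivity environments. -/
def precE (S1 S2 : GEnv) : Prop := ∀ x, (S1 x).prec (S2 x)

/-- A sensitivity environment is bounded if no interval contains ∞. -/
def boundedE (S : GEnv) : Prop := ∀ x, (S x).bounded

/-- Substitution [Sr/r]S of a sensitivity environment for a distance
variable in a sensitivity environment. -/
def substDVE (r : String) (Sr : GEnv) (S : GEnv) : GEnv :=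
  fun y => (if y = r then SI.zero else S y).add ((S r).mul (Sr y))

/-! ## GS types -/

/-- GS types g; `arrow g₁ S₁ g₂ S₂` is the function type g₁^{S₁} → g₂^{S₂};
`all r g S` is the distance abstraction type ∀r. g^{S}. -/
inductive GTy where
  | base : BaseTy → GTy
  | arrow : GTy → GEnv → GTy → GEnv → GTy
  | all : String → GTy → GEnv → GTy

/-- Sensitivity types T = g^Σ. -/
abbrev CTy := GTy × GEnv

/-- Substitution [Sr/r] of a sensitivity environment for a distance variable
in a type (recursively in all nested sensitivity environments, respecting
the ∀-binder). -/
def substT (r : String) (Sr : GEnv) : GTy → GTy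
  | .base B => .base B
  | .arrow g1 S1 g2 S2 =>
      .arrow (substT r Sr g1) (substDVE r Sr S1) (substT r Sr g2) (substDVE r Sr S2)
  | .all r' g S =>
      if r' = r then .all r' g S
      else .all r' (substT r Sr g) (substDVE r Sr S)

/-- Size of a type (used for termination of the logical relations). -/
def GTy.size : GTy → ℕ
  | .base _ => 1
  | .arrow g1 _ g2 _ => g1.size + g2.size + 1
  | .all _ g _ => g.size + 1

theorem size_substT (r : String) (Sr : GEnv) (g : GTy) :
    (substT r Sr g).size = g.size := by
  induction g with
  | base B => rfl
  | arrow g1 S1 g2 S2 ih1 ih2 => simp [substT, GTy.size, ih1, ih2]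
  | all r' g S ih => by_cases h : r' = r <;> simp [substT, h, GTy.size, ih]

/-- Precision on GS types (covariant everywhere). -/
inductive TyPrec : GTy → GTy → Prop
  | base : TyPrec (.base B) (.base B)
  | arrow : TyPrec g1 g1' → precE S1 S1' → TyPrec g2 g2' → precE S2 S2' →
      TyPrec (.arrow g1 S1 g2 S2) (.arrow g1' S1' g2' S2')
  | all : TyPrec g g' → precE S S' →
      TyPrec (.all r g S) (.all r g' S')

/-- Precision on sensitivity types. -/
def CTyPrec (T T' : CTy) : Prop := TyPrec T.1 T'.1 ∧ precE T.2 T'.2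

/-! ## Evidence, interior and consistent transitivity -/

/-- An evidence for a consistent subtyping judgment: a pair of sensitivity
types. -/
abbrev Ev := CTy × CTy

/-- Evidence precision ⊑² (componentwise precision). -/
def EvPrec (ε ε' : Ev) : Prop := CTyPrec ε.1 ε'.1 ∧ CTyPrec ε.2 ε'.2

/-- Interior of two sensitivity environments (pointwise interior of the
consistent sensitivity ordering). -/
def interE (S1 S2 : GEnv) : Option (GEnv × GEnv) :=
  if h : ∀ x, (S1 x).lo ≤ (S2 x).hi then
    some (fun x => ⟨(S1 x).lo, (S1 x).hi ⊓ (S2 x).hi, le_inf (S1 x).isle (h x)⟩,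
          fun x => ⟨(S1 x).lo ⊔ (S2 x).lo, (S2 x).hi, sup_le (h x) (S2 x).isle⟩)
  else none

/-- Interior of two GS types (evidence for a consistent subtyping judgment,
contravariant in function domains). -/
def interT : GTy → GTy → Option (GTy × GTy)
  | .base B1, .base B2 => if B1 = B2 then some (.base B1, .base B2) else none
  | .arrow a1 sa1 b1 sb1, .arrow a2 sa2 b2 sb2 => do
      let (a2', a1') ← interT a2 a1
      let (sa2', sa1') ← interE sa2 sa1
      let (b1', b2') ← interT b1 b2
      let (sb1', sb2') ← interE sb1 sb2
      pure (.arrow a1' sa1' b1' sb1', .arrow a2' sa2' b2' sb2')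
  | .all r1 g1 s1, .all r2 g2 s2 =>
      if r1 = r2 then do
        let (g1', g2') ← interT g1 g2
        let (s1', s2') ← interE s1 s2
        pure (.all r1 g1' s1', .all r2 g2' s2')
      else none
  | _, _ => none
termination_by t1 t2 => t1.size + t2.size
decreasing_by all_goals simp [GTy.size] <;> omega

/-- Interior of two sensitivity types: the initial evidence for their
consistent subtyping judgment. -/
def interC (T1 T2 : CTy) : Option Ev := do
  let (g1, g2) ← interT T1.1 T2.1
  let (s1, s2) ← interE T1.2 T2.2
  pure ((g1, s1), (g2, s2))

/-- Consistent transitivity on (pointwise) sensitivity environments: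
combines evidences ⟨s1,s2⟩ and ⟨s3,s4⟩. -/
def ctrE (s1 s2 s3 s4 : GEnv) : Option (GEnv × GEnv) :=
  if h : ∀ x, (s1 x).lo ≤ (s1 x).hi ⊓ (s2 x).hi ⊓ (s3 x).hi ∧
              (s2 x).lo ⊔ (s3 x).lo ⊔ (s4 x).lo ≤ (s4 x).hi then
    some (fun x => ⟨(s1 x).lo, (s1 x).hi ⊓ (s2 x).hi ⊓ (s3 x).hi, (h x).1⟩,
          fun x => ⟨(s2 x).lo ⊔ (s3 x).lo ⊔ (s4 x).lo, (s4 x).hi, (h x).2⟩)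
  else none

/-- Consistent transitivity on GS types: combines evidences ⟨t1,t2⟩ and
⟨t3,t4⟩ (contravariant in function domains). -/
def ctrT : GTy → GTy → GTy → GTy → Option (GTy × GTy)
  | .base B1, .base B2, .base B3, .base B4 =>
      if B1 = B2 ∧ B2 = B3 ∧ B3 = B4 then some (.base B1, .base B4) else none
  | .arrow a1 sa1 b1 sb1, .arrow a2 sa2 b2 sb2,
    .arrow a3 sa3 b3 sb3, .arrow a4 sa4 b4 sb4 => do
      let (a4', a1') ← ctrT a4 a3 a2 a1
      let (sa4', sa1') ← ctrE sa4 sa3 sa2 sa1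
      let (b1', b4') ← ctrT b1 b2 b3 b4
      let (sb1', sb4') ← ctrE sb1 sb2 sb3 sb4
      pure (.arrow a1' sa1' b1' sb1', .arrow a4' sa4' b4' sb4')
  | .all r1 g1 s1, .all r2 g2 s2, .all r3 g3 s3, .all r4 g4 s4 =>
      if r1 = r2 ∧ r2 = r3 ∧ r3 = r4 then do
        let (g1', g4') ← ctrT g1 g2 g3 g4
        let (s1', s4') ← ctrE s1 s2 s3 s4
        pure (.all r1 g1' s1', .all r4 g4' s4')
      else none
  | _, _, _, _ => none
termination_by t1 t2 t3 t4 => t1.size + t2.size + t3.size + t4.size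
decreasing_by all_goals simp [GTy.size] <;> omega

/-- Consistent transitivity on evidences: ε₁ ∘ ε₂, undefined when transitivity
is refuted. -/
def ctrC (e1 e2 : Ev) : Option Ev := do
  let (g1, g4) ← ctrT e1.1.1 e1.2.1 e2.1.1 e2.2.1
  let (s1, s4) ← ctrE e1.1.2 e1.2.2 e2.1.2 e2.2.2
  pure ((g1, s1), (g4, s4))

/-! ## GSCheck: the internal evidence language -/

/-- GSCheck expressions: ascriptions `ascr ε e T` carry an evidence ε and an
ascribed sensitivity type T; `err` is the runtime error term. -/
inductive CExpr where
  | const : Const → CExpr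
  | op : Op → CExpr → CExpr → CExpr
  | var : String → CExpr
  | lam : String → CTy → CExpr → CExpr
  | app : CExpr → CExpr → CExpr
  | tlam : String → CExpr → CExpr
  | tapp : CExpr → GEnv → CExpr
  | ascr : Ev → CExpr → CTy → CExpr
  | err : CExpr

mutual
/-- Simple values u ::= c | λ(x:T).e | Λr.v. -/
inductive Simple : CExpr → Prop
  | const : Simple (.const c)
  | lam : Simple (.lam x T e)
  | tlam : IsVal v → Simple (.tlam r v)
/-- Values v ::= ε u :: T. -/
inductive IsVal : CExpr → Prop
  | mk : Simple u → IsVal (.ascr ε u T)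
end

/-- Term substitution. -/
def csubst (x : String) (v : CExpr) : CExpr → CExpr
  | .const c => .const c
  | .op o a b => .op o (csubst x v a) (csubst x v b)
  | .var y => if y = x then v else .var y
  | .lam y T e => if y = x then .lam y T e else .lam y T (csubst x v e)
  | .app a b => .app (csubst x v a) (csubst x v b)
  | .tlam r e => .tlam r (csubst x v e)
  | .tapp e S => .tapp (csubst x v e) S
  | .ascr ε e T => .ascr ε (csubst x v e) T
  | .err => .err

/-- Substitution of a distance variable in a sensitivity type. -/
def substCTy (r : String) (Sr : GEnv) (T : CTy) : CTy :=
  (substT r Sr T.1, substDVE r Sr T.2)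

/-- Substitution of a distance variable in an evidence. -/
def substEv (r : String) (Sr : GEnv) (ε : Ev) : Ev :=
  (substCTy r Sr ε.1, substCTy r Sr ε.2)

/-- Substitution of a distance variable in a GSCheck expression. -/
def dsubst (r : String) (Sr : GEnv) : CExpr → CExpr
  | .const c => .const c
  | .op o a b => .op o (dsubst r Sr a) (dsubst r Sr b)
  | .var y => .var y
  | .lam y T e => .lam y (substCTy r Sr T) (dsubst r Sr e)
  | .app a b => .app (dsubst r Sr a) (dsubst r Sr b)
  | .tlam r' e => if r' = r then .tlam r' e else .tlam r' (dsubst r Sr e)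
  | .tapp e S => .tapp (dsubst r Sr e) (substDVE r Sr S)
  | .ascr ε e T => .ascr (substEv r Sr ε) (dsubst r Sr e) (substCTy r Sr T)
  | .err => .err

/-- Denotation of the primitive operations. -/
def opDenote : Op → Const → Const → Option Const
  | .add, .r a, .r b => some (.r (a + b))
  | .mul, .r a, .r b => some (.r (a * b))
  | .le, .r a, .r b => some (.b (if a ≤ b then true else false))
  | _, _, _ => none

/-- Sensitivity typing of the primitive operations: addition adds the
sensitivity environments; multiplication and comparison scale by ∞. -/
def opCTy : Op → CTy → CTy → Option CTy
  | .add, (.base .real, S1), (.base .real, S2) => some (.base .real, addE S1 S2)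
  | .mul, (.base .real, S1), (.base .real, S2) =>
      some (.base .real, scaleE SI.inf (addE S1 S2))
  | .le, (.base .real, S1), (.base .real, S2) =>
      some (.base .bool, scaleE SI.inf (addE S1 S2))
  | _, _, _ => none

/-- Lifting of operation typing to evidences. -/
def opEv (o : Op) (ε1 ε2 : Ev) : Option Ev := do
  let a ← opCTy o ε1.1 ε2.1
  let b ← opCTy o ε1.2 ε2.2
  pure (a, b)

/-- Domain of a function sensitivity type. -/
def domC : CTy → Option CTy
  | (.arrow g1 S1 _ _, _) => some (g1, S1)
  | _ => none

/-- Codomain of a function sensitivity type (adding the function's own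
top-level sensitivity environment). -/
def codC : CTy → Option CTy
  | (.arrow _ _ g2 S2, S) => some (g2, addE S2 S)
  | _ => none

/-- Instantiation of a distance-abstraction sensitivity type. -/
def instC (T : CTy) (Sr : GEnv) : Option CTy :=
  match T with
  | (.all r g Sg, S) => some (substT r Sr g, addE (substDVE r Sr Sg) S)
  | _ => none

/-- Inversion of an evidence for the domain (contravariant). -/
def domEv (ε : Ev) : Option Ev := do
  let d2 ← domC ε.2
  let d1 ← domC ε.1
  pure (d2, d1)

/-- Inversion of an evidence for the codomain. -/
def codEv (ε : Ev) : Option Ev := do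
  let c1 ← codC ε.1
  let c2 ← codC ε.2
  pure (c1, c2)

/-- Inversion of an evidence for instantiation. -/
def instEv (ε : Ev) (Sr : GEnv) : Option Ev := do
  let i1 ← instC ε.1 Sr
  let i2 ← instC ε.2 Sr
  pure (i1, i2)

/-- Reduction of GSCheck (the notions of reduction of Figure 6 together with
the congruence closure under evaluation contexts and error propagation). -/
inductive Step : CExpr → CExpr → Prop
  | op : opDenote o c1 c2 = some c → opEv o ε1 ε2 = some ε → opCTy o T1 T2 = some T →
      Step (.op o (.ascr ε1 (.const c1) T1) (.ascr ε2 (.const c2) T2))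
           (.ascr ε (.const c) T)
  | appOk : Simple u → domEv ε = some εd → ctrC ε1 εd = some ε' →
      codEv ε = some εc → codC T = some Tc →
      Step (.app (.ascr ε (.lam x T1' eb) T) (.ascr ε1 u T1))
           (.ascr εc (csubst x (.ascr ε' u T1') eb) Tc)
  | appErr : Simple u → domEv ε = some εd → ctrC ε1 εd = none →
      Step (.app (.ascr ε (.lam x T1' eb) T) (.ascr ε1 u T1)) .err
  | inst : IsVal v → instEv ε Sr = some ε' → instC T Sr = some T' →
      Step (.tapp (.ascr ε (.tlam r v) T) Sr) (.ascr ε' (dsubst r Sr v) T')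
  | ascrOk : Simple u → ctrC ε' ε = some ε'' →
      Step (.ascr ε (.ascr ε' u T') T) (.ascr ε'' u T)
  | ascrErr : Simple u → ctrC ε' ε = none →
      Step (.ascr ε (.ascr ε' u T') T) .err
  -- congruence (evaluation contexts)
  | opL : Step e1 e1' → Step (.op o e1 e2) (.op o e1' e2)
  | opR : IsVal v → Step e2 e2' → Step (.op o v e2) (.op o v e2')
  | appL : Step e1 e1' → Step (.app e1 e2) (.app e1' e2)
  | appR : IsVal v → Step e2 e2' → Step (.app v e2) (.app v e2')
  | tappC : Step e e' → Step (.tapp e S) (.tapp e' S)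
  | tlamC : Step e e' → Step (.tlam r e) (.tlam r e')
  | ascrC : Step e e' → Step (.ascr ε e T) (.ascr ε e' T)
  -- error propagation
  | opLErr : Step (.op o .err e2) .err
  | opRErr : IsVal v → Step (.op o v .err) .err
  | appLErr : Step (.app .err e2) .err
  | appRErr : IsVal v → Step (.app v .err) .err
  | tappErr : Step (.tapp .err S) .err
  | tlamErr : Step (.tlam r .err) .err
  | ascrErrP : Step (.ascr ε .err T) .err

/-- Zero or more reduction steps. -/
def Steps : CExpr → CExpr → Prop := Relation.ReflTransGen Step

/-- e ⇓ v : e reduces to the value v. -/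
def EvalsTo (e v : CExpr) : Prop := Steps e v ∧ IsVal v

/-- e ⇓ error. -/
def EvalsErr (e : CExpr) : Prop := Steps e .err

/-- Applying a substitution γ (a value environment) to a GSCheck expression. -/
def cmsubst (γ : String → CExpr) : CExpr → CExpr
  | .const c => .const c
  | .op o a b => .op o (cmsubst γ a) (cmsubst γ b)
  | .var y => γ y
  | .lam y T e => .lam y T (cmsubst (Function.update γ y (.var y)) e)
  | .app a b => .app (cmsubst γ a) (cmsubst γ b)
  | .tlam r e => .tlam r (cmsubst γ e)
  | .tapp e S => .tapp (cmsubst γ e) S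
  | .ascr ε e T => .ascr ε (cmsubst γ e) T
  | .err => .err

/-! ## Monitors, distances, canonical forms -/

/-- The monitor of a value: its evidence. -/
def monOf : CExpr → Option Ev
  | .ascr ε _ _ => some ε
  | _ => none

/-- The monitored sensitivity of a value: the static environment of lower
bounds of the sensitivity environment of the right-hand component of its
evidence. -/
def msOf : CExpr → String → ENNReal
  | .ascr (_, (_, S')) _ _ => fun r => (S' r).lo
  | _ => fun _ => 0

/-- Equi-precise monitors (each is more precise than the other). -/
def EquiEv (v1 v2 : CExpr) : Prop :=
  ∃ ε1 ε2, monOf v1 = some ε1 ∧ monOf v2 = some ε2 ∧ EvPrec ε1 ε2 ∧ EvPrec ε2 ε1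

/-- Canonical forms of a base type. -/
def CanonC (B : BaseTy) (v : CExpr) : Prop :=
  match B, v with
  | .real, .ascr _ (.const (.r _)) _ => True
  | .bool, .ascr _ (.const (.b _)) _ => True
  | _, _ => False

/-- The metric d_B on canonical forms of base types. -/
def dBC (B : BaseTy) (v1 v2 : CExpr) : ENNReal :=
  match B, v1, v2 with
  | .real, .ascr _ (.const (.r a)) _, .ascr _ (.const (.r b)) _ =>
      ENNReal.ofReal |a - b|
  | .bool, .ascr _ (.const (.b a)) _, .ascr _ (.const (.b b)) _ =>
      if a = b then 0 else ⊤
  | _, _, _ => ⊤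

/-- Distance environments: maps from distance variables to distances. -/
abbrev DEnv := String → ENNReal

/-- A distance environment is bounded if it avoids ∞. -/
def boundedD (dl : DEnv) : Prop := ∀ r, dl r ≠ ⊤

/-- Σ·δ for a static (fully precise) sensitivity environment Σ. -/
def dot (S : String → ENNReal) (dl : DEnv) : ENNReal := ∑' r, S r * dl r

/-- A static environment Σ' is (pointwise) within the gradual environment Σ,
i.e. Σ' is a static environment more precise than Σ. -/
def staticPrec (S' : String → ENNReal) (S : GEnv) : Prop :=
  ∀ r, (S r).lo ≤ S' r ∧ S' r ≤ (S r).hi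

/-! ## Logical relations (Figure 4): termination-insensitive -/

/-- Value logical relation (v₁,v₂) ∈ V_δ⟦g^Σ⟧ (Figure 4); the computation
relation E is inlined in the arrow and ∀ cases. -/
def Vrel (dl : DEnv) : GTy → GEnv → CExpr → CExpr → Prop
  | .base B, _, v1, v2 =>
      CanonC B v1 ∧ CanonC B v2 ∧
      dBC B v1 v2 ≤ dot (fun r => msOf v1 r ⊔ msOf v2 r) dl
  | .arrow g1 S1 g2 S2, S, v1, v2 =>
      IsVal v1 ∧ IsVal v2 ∧
      ∀ v1' v2', Vrel dl g1 S1 v1' v2' →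
        ∀ w1 w2, EvalsTo (.app v1 v1') w1 → EvalsTo (.app v2 v2') w2 →
          Vrel dl g2 (addE S2 S) w1 w2
  | .all r g Sg, S, v1, v2 =>
      IsVal v1 ∧ IsVal v2 ∧
      ∀ Sr, ∀ w1 w2, EvalsTo (.tapp v1 Sr) w1 → EvalsTo (.tapp v2 Sr) w2 →
        Vrel dl (substT r Sr g) (addE (substDVE r Sr Sg) S) w1 w2
termination_by g _ _ _ => g.size
decreasing_by all_goals simp [GTy.size, size_substT] <;> omega

/-- Computation logical relation (e₁,e₂) ∈ E_δ⟦g^Σ⟧. -/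
def Erel (dl : DEnv) (g : GTy) (S : GEnv) (e1 e2 : CExpr) : Prop :=
  ∀ v1 v2, EvalsTo e1 v1 → EvalsTo e2 v2 → Vrel dl g S v1 v2

/-- Type environments. -/
abbrev GTEnv := String → Option CTy

/-- Related substitutions (γ₁,γ₂) ∈ G_δ⟦Γ⟧. -/
def Grel (dl : DEnv) (Γ : GTEnv) (γ1 γ2 : String → CExpr) : Prop :=
  ∀ x T, Γ x = some T → Vrel dl T.1 T.2 (γ1 x) (γ2 x)

/-- Semantic gradual sensitivity typing Γ ⊨ e : T. -/
def SemGTy (Γ : GTEnv) (e : CExpr) (T : CTy) : Prop :=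
  ∀ dl γ1 γ2, Grel dl Γ γ1 γ2 → Erel dl T.1 T.2 (cmsubst γ1 e) (cmsubst γ2 e)

/-! ## Logical relations (Figure 5): termination-sensitive -/

/-- Termination-sensitive value logical relation (v₁,v₂) ∈ Vᵗˢ_δ⟦g^Σ⟧
(Figure 5); the computation relation Eᵗˢ is inlined in the arrow and ∀
cases. -/
def VrelTS (dl : DEnv) : GTy → GEnv → CExpr → CExpr → Prop
  | .base B, _, v1, v2 =>
      EquiEv v1 v2 ∧ CanonC B v1 ∧ CanonC B v2 ∧
      dBC B v1 v2 ≤ dot (fun r => msOf v1 r ⊔ msOf v2 r) dl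
  | .arrow g1 S1 g2 S2, S, v1, v2 =>
      EquiEv v1 v2 ∧ IsVal v1 ∧ IsVal v2 ∧
      ∀ v1' v2', VrelTS dl g1 S1 v1' v2' →
        ∀ w1, EvalsTo (.app v1 v1') w1 →
          ∃ w2, EvalsTo (.app v2 v2') w2 ∧ VrelTS dl g2 (addE S2 S) w1 w2
  | .all r g Sg, S, v1, v2 =>
      EquiEv v1 v2 ∧ IsVal v1 ∧ IsVal v2 ∧
      ∀ Sr, boundedE Sr →
        ∀ w1, EvalsTo (.tapp v1 Sr) w1 →
          ∃ w2, EvalsTo (.tapp v2 Sr) w2 ∧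
            VrelTS dl (substT r Sr g) (addE (substDVE r Sr Sg) S) w1 w2
termination_by g _ _ _ => g.size
decreasing_by all_goals simp [GTy.size, size_substT] <;> omega

/-- Termination-sensitive computation logical relation. -/
def ErelTS (dl : DEnv) (g : GTy) (S : GEnv) (e1 e2 : CExpr) : Prop :=
  ∀ v1, EvalsTo e1 v1 → ∃ v2, EvalsTo e2 v2 ∧ VrelTS dl g S v1 v2

/-- Termination-sensitive related substitutions (γ₁,γ₂) ∈ Gᵗˢ_δ⟦Γ⟧ (requires
a bounded distance environment). -/
def GrelTS (dl : DEnv) (Γ : GTEnv) (γ1 γ2 : String → CExpr) : Prop :=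
  boundedD dl ∧ ∀ x T, Γ x = some T → VrelTS dl T.1 T.2 (γ1 x) (γ2 x)

/-- Termination-sensitive semantic gradual sensitivity typing Γ ⊨ᵗˢ e : g^Σ
(requires the top-level sensitivity environment to be bounded). -/
def SemGTyTS (Γ : GTEnv) (e : CExpr) (T : CTy) : Prop :=
  boundedE T.2 ∧
  ∀ dl γ1 γ2, GrelTS dl Γ γ1 γ2 → ErelTS dl T.1 T.2 (cmsubst γ1 e) (cmsubst γ2 e)

/-! ## Gradual metric preservation -/

/-- δ-proximity of two substitutions for a base-type environment Γ:
values are canonical forms at bounded distance as measured by the join of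
their monitored sensitivities. -/
def Proximate (dl : DEnv) (Γ : GTEnv) (γ1 γ2 : String → CExpr) : Prop :=
  ∀ x B S, Γ x = some (.base B, S) →
    CanonC B (γ1 x) ∧ CanonC B (γ2 x) ∧
    dBC B (γ1 x) (γ2 x) ≤ dot (fun r => msOf (γ1 x) r ⊔ msOf (γ2 x) r) dl

/-- Termination-sensitive δ-proximity: additionally δ is bounded and
corresponding values carry equi-precise evidences. -/
def ProximateTS (dl : DEnv) (Γ : GTEnv) (γ1 γ2 : String → CExpr) : Prop :=
  boundedD dl ∧
  ∀ x B S, Γ x = some (.base B, S) →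
    EquiEv (γ1 x) (γ2 x) ∧ CanonC B (γ1 x) ∧ CanonC B (γ2 x) ∧
    dBC B (γ1 x) (γ2 x) ≤ dot (fun r => msOf (γ1 x) r ⊔ msOf (γ2 x) r) dl

/-- Gradual metric preservation GMP(Γ, e, B, Σ). -/
def GMP (Γ : GTEnv) (e : CExpr) (B : BaseTy) (S : GEnv) : Prop :=
  ∀ dl γ1 γ2, Proximate dl Γ γ1 γ2 →
    ∀ v1 v2, EvalsTo (cmsubst γ1 e) v1 → EvalsTo (cmsubst γ2 e) v2 →
      ∃ S' : String → ENNReal, staticPrec S' S ∧ dBC B v1 v2 ≤ dot S' dl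

/-- Termination-sensitive gradual metric preservation GMPᵗˢ(Γ, e, B, Σ). -/
def GMPts (Γ : GTEnv) (e : CExpr) (B : BaseTy) (S : GEnv) : Prop :=
  ∀ dl γ1 γ2, ProximateTS dl Γ γ1 γ2 →
    ∀ v1, EvalsTo (cmsubst γ1 e) v1 →
      ∃ v2, EvalsTo (cmsubst γ2 e) v2 ∧
        ∃ S' : String → ENNReal, staticPrec S' S ∧ dBC B v1 v2 ≤ dot S' dl

/-! ## The source language GS and type-directed elaboration (Figure 7) -/

/-- GS source expressions. -/
inductive GExpr where
  | const : Const → GExpr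
  | op : Op → GExpr → GExpr → GExpr
  | var : String → GExpr
  | lam : String → CTy → GExpr → GExpr
  | app : GExpr → GExpr → GExpr
  | tlam : String → GExpr → GExpr
  | tapp : GExpr → GEnv → GExpr
  | ascr : GExpr → CTy → GExpr

/-- The base type of a constant. -/
def constBTy : Const → BaseTy
  | .r _ => .real
  | .b _ => .bool

/-- Type-directed elaboration Γ ⊢ e ⇝ e' : T from GS to GSCheck (Figure 7);
it doubles as the syntactic type system of GS. -/
inductive Elab : GTEnv → GExpr → CExpr → CTy → Prop
  | const : interC (.base (constBTy c), zeroE) (.base (constBTy c), zeroE) = some ε →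
      Elab Γ (.const c) (.ascr ε (.const c) (.base (constBTy c), zeroE))
        (.base (constBTy c), zeroE)
  | op : Elab Γ a a' Ta → Elab Γ b b' Tb → opCTy o Ta Tb = some T →
      Elab Γ (.op o a b) (.op o a' b') T
  | var : Γ x = some T → Elab Γ (.var x) (.var x) T
  | lam : Elab (Function.update Γ x (some T1)) e e' T2 →
      interC (.arrow T1.1 T1.2 T2.1 T2.2, zeroE) (.arrow T1.1 T1.2 T2.1 T2.2, zeroE)
        = some ε →
      Elab Γ (.lam x T1 e)
        (.ascr ε (.lam x T1 e') (.arrow T1.1 T1.2 T2.1 T2.2, zeroE))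
        (.arrow T1.1 T1.2 T2.1 T2.2, zeroE)
  | app : Elab Γ a a' Ta → Elab Γ b b' Tb →
      domC Ta = some Td → interC Tb Td = some ε2 → codC Ta = some Tc →
      Elab Γ (.app a b) (.app a' (.ascr ε2 b' Td)) Tc
  | tlam : Elab Γ e e' T →
      interC (.all r T.1 T.2, zeroE) (.all r T.1 T.2, zeroE) = some ε →
      Elab Γ (.tlam r e) (.ascr ε (.tlam r e') (.all r T.1 T.2, zeroE))
        (.all r T.1 T.2, zeroE)
  | tapp : Elab Γ e e' T → instC T Sr = some T' →
      Elab Γ (.tapp e Sr) (.tapp e' Sr) T'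
  | ascr : Elab Γ e e' T → interC T T' = some ε →
      Elab Γ (.ascr e T') (.ascr ε e' T') T'

/-- The empty type environment. -/
def emptyEnv : GTEnv := fun _ => none

/-! ## Precision on expressions -/

/-- Precision on GS source expressions (the natural syntactic lifting of type
precision to terms). -/
inductive GPrec : GExpr → GExpr → Prop
  | const : GPrec (.const c) (.const c)
  | op : GPrec a a' → GPrec b b' → GPrec (.op o a b) (.op o a' b')
  | var : GPrec (.var x) (.var x)
  | lam : CTyPrec T T' → GPrec e e' → GPrec (.lam x T e) (.lam x T' e')
  | app : GPrec a a' → GPrec b b' → GPrec (.app a b) (.app a' b')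
  | tlam : GPrec e e' → GPrec (.tlam r e) (.tlam r e')
  | tapp : GPrec e e' → precE S S' → GPrec (.tapp e S) (.tapp e' S')
  | ascr : GPrec e e' → CTyPrec T T' → GPrec (.ascr e T) (.ascr e' T')

/-- Precision on GSCheck expressions (including evidences). -/
inductive CPrec : CExpr → CExpr → Prop
  | const : CPrec (.const c) (.const c)
  | op : CPrec a a' → CPrec b b' → CPrec (.op o a b) (.op o a' b')
  | var : CPrec (.var x) (.var x)
  | lam : CTyPrec T T' → CPrec e e' → CPrec (.lam x T e) (.lam x T' e')
  | app : CPrec a a' → CPrec b b' → CPrec (.app a b) (.app a' b')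
  | tlam : CPrec e e' → CPrec (.tlam r e) (.tlam r e')
  | tapp : CPrec e e' → precE S S' → CPrec (.tapp e S) (.tapp e' S')
  | ascr : EvPrec ε ε' → CPrec e e' → CTyPrec T T' →
      CPrec (.ascr ε e T) (.ascr ε' e' T')
  | err : CPrec .err .err

/-! Elaboration is monotone in precision, by induction on the derivation for the more precise
term. Every premise of Figure 7 that can fail is either a partial type operator (primitive
operation, domain, codomain, instantiation), which commutes with precision, or the definedness
of an interior. An interior is defined exactly when consistent subtyping holds, and consistent
subtyping only compares lower bounds of one side with upper bounds of the other, so widening the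
intervals preserves it. -/

theorem SI.prec.refl (a : SI) : a.prec a := ⟨le_rfl, le_rfl⟩

theorem SI.prec.add {a a' b b' : SI} (ha : a.prec a') (hb : b.prec b') :
    (a.add b).prec (a'.add b') :=
  ⟨add_le_add ha.1 hb.1, add_le_add ha.2 hb.2⟩

theorem SI.prec.mul {a a' b b' : SI} (ha : a.prec a') (hb : b.prec b') :
    (a.mul b).prec (a'.mul b') :=
  ⟨mul_le_mul' ha.1 hb.1, mul_le_mul' ha.2 hb.2⟩

theorem SI.cle.mono_prec {a a' b b' : SI} (h : a.cle b) (ha : a.prec a') (hb : b.prec b') :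
    a'.cle b' :=
  ha.1.trans (h.trans hb.2)

theorem precE.refl (S : GEnv) : precE S S := fun _ => .refl _

theorem precE.addE {S1 S1' S2 S2' : GEnv} (h1 : precE S1 S1') (h2 : precE S2 S2') :
    precE (addE S1 S2) (addE S1' S2') :=
  fun x => (h1 x).add (h2 x)

theorem precE.scaleE {S S' : GEnv} (g : SI) (h : precE S S') :
    precE (scaleE g S) (scaleE g S') :=
  fun x => (SI.prec.refl g).mul (h x)

theorem precE.substDVE {r : String} {S S' Sr Sr' : GEnv}
    (hS : precE S S') (hSr : precE Sr Sr') :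
    precE (substDVE r Sr S) (substDVE r Sr' S') := by
  intro y
  refine SI.prec.add ?_ ((hS r).mul (hSr y))
  split
  · exact .refl _
  · exact hS y

theorem TyPrec.refl : ∀ g : GTy, TyPrec g g
  | .base _ => .base
  | .arrow g1 S1 g2 S2 => .arrow (.refl g1) (.refl S1) (.refl g2) (.refl S2)
  | .all _ g S => .all (.refl g) (.refl S)

theorem TyPrec.substT {r : String} {Sr Sr' : GEnv} (hSr : precE Sr Sr') {g g' : GTy}
    (h : TyPrec g g') : TyPrec (GS.substT r Sr g) (GS.substT r Sr' g') := by
  induction h with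
  | base => exact .base
  | arrow _ hS1 _ hS2 ih1 ih2 => exact .arrow ih1 (hS1.substDVE hSr) ih2 (hS2.substDVE hSr)
  | @all g g' S S' r' hg hS ih =>
    unfold GS.substT
    split
    · exact .all hg hS
    · exact .all ih (hS.substDVE hSr)

theorem CTyPrec.refl (T : CTy) : CTyPrec T T := ⟨.refl _, .refl _⟩

theorem interE_isSome_iff {S1 S2 : GEnv} :
    (interE S1 S2).isSome ↔ ∀ x, (S1 x).cle (S2 x) := by
  unfold interE SI.cle
  split <;> simp_all

/-- Consistent subtyping `g₁ ≲ g₂`, the judgment whose evidence `interT` computes. -/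
inductive ConsistentSubtype : GTy → GTy → Prop
  | base : ConsistentSubtype (.base B) (.base B)
  | arrow : ConsistentSubtype a2 a1 → (∀ x, (sa2 x).cle (sa1 x)) →
      ConsistentSubtype b1 b2 → (∀ x, (sb1 x).cle (sb2 x)) →
      ConsistentSubtype (.arrow a1 sa1 b1 sb1) (.arrow a2 sa2 b2 sb2)
  | all : ConsistentSubtype g1 g2 → (∀ x, (s1 x).cle (s2 x)) →
      ConsistentSubtype (.all r g1 s1) (.all r g2 s2)

theorem interT_isSome_iff (g1 g2 : GTy) :
    (interT g1 g2).isSome ↔ ConsistentSubtype g1 g2 := by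
  induction g1, g2 using interT.induct with
  | case1 B => simp [interT, ConsistentSubtype.base]
  | case2 B1 B2 hne => simp [interT, hne]; rintro ⟨⟩; exact hne rfl
  | case3 a1 sa1 b1 sb1 a2 sa2 b2 sb2 iha ihb =>
    have : (interT (a1.arrow sa1 b1 sb1) (a2.arrow sa2 b2 sb2)).isSome ↔
        (interT a2 a1).isSome ∧ (interE sa2 sa1).isSome ∧
          (interT b1 b2).isSome ∧ (interE sb1 sb2).isSome := by
      rw [interT]
      cases interT a2 a1 <;> cases interE sa2 sa1 <;> cases interT b1 b2 <;>
        cases interE sb1 sb2 <;> simp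
    rw [this, iha, ihb, interE_isSome_iff, interE_isSome_iff]
    exact ⟨fun ⟨ha, hsa, hb, hsb⟩ => .arrow ha hsa hb hsb,
      fun | .arrow ha hsa hb hsb => ⟨ha, hsa, hb, hsb⟩⟩
  | case4 g1 s1 r g2 s2 ih =>
    have : (interT (.all r g1 s1) (.all r g2 s2)).isSome ↔
        (interT g1 g2).isSome ∧ (interE s1 s2).isSome := by
      rw [interT, if_pos rfl]
      cases interT g1 g2 <;> cases interE s1 s2 <;> simp
    rw [this, ih, interE_isSome_iff]
    exact ⟨fun ⟨hg, hs⟩ => .all hg hs, fun | .all hg hs => ⟨hg, hs⟩⟩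
  | case5 r1 g1 s1 r2 g2 s2 hne => simp [interT, hne]; rintro ⟨⟩; exact hne rfl
  | case6 g1 g2 hbase harrow hall =>
    cases g1 <;> cases g2
    all_goals first
      | exact (hbase _ _ rfl rfl).elim
      | exact (harrow _ _ _ _ _ _ _ _ rfl rfl).elim
      | exact (hall _ _ _ _ _ _ rfl rfl).elim
      | (simp [interT]; rintro ⟨⟩)

theorem ConsistentSubtype.mono_prec {g1 g2 g1' g2' : GTy} (h : ConsistentSubtype g1 g2)
    (h1 : TyPrec g1 g1') (h2 : TyPrec g2 g2') : ConsistentSubtype g1' g2' := by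
  induction h generalizing g1' g2' with
  | base => cases h1; cases h2; exact .base
  | arrow _ hsa _ hsb iha ihb =>
    cases h1 with | arrow ha1 hsa1 hb1 hsb1 =>
    cases h2 with | arrow ha2 hsa2 hb2 hsb2 =>
    exact .arrow (iha ha2 ha1) (fun x => (hsa x).mono_prec (hsa2 x) (hsa1 x))
      (ihb hb1 hb2) (fun x => (hsb x).mono_prec (hsb1 x) (hsb2 x))
  | all _ hs ih =>
    cases h1 with | all hg1 hs1 =>
    cases h2 with | all hg2 hs2 =>
    exact .all (ih hg1 hg2) (fun x => (hs x).mono_prec (hs1 x) (hs2 x))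

theorem interC_isSome_iff (T1 T2 : CTy) :
    (interC T1 T2).isSome ↔ ConsistentSubtype T1.1 T2.1 ∧ ∀ x, (T1.2 x).cle (T2.2 x) := by
  rw [← interT_isSome_iff, ← interE_isSome_iff, interC]
  cases interT T1.1 T2.1 <;> cases interE T1.2 T2.2 <;> simp

theorem exists_interC_of_prec {T1 T2 T1' T2' : CTy} {ε : Ev}
    (h1 : CTyPrec T1 T1') (h2 : CTyPrec T2 T2') (h : interC T1 T2 = some ε) :
    ∃ ε', interC T1' T2' = some ε' := by
  obtain ⟨hg, hS⟩ := (interC_isSome_iff T1 T2).mp (by simp [h])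
  rw [← Option.isSome_iff_exists, interC_isSome_iff]
  exact ⟨hg.mono_prec h1.1 h2.1, fun x => (hS x).mono_prec (h1.2 x) (h2.2 x)⟩

theorem exists_opCTy_of_prec {o : Op} {Ta Tb Ta' Tb' T : CTy}
    (ha : CTyPrec Ta Ta') (hb : CTyPrec Tb Tb') (h : opCTy o Ta Tb = some T) :
    ∃ T', opCTy o Ta' Tb' = some T' ∧ CTyPrec T T' := by
  obtain ⟨ga, Sa⟩ := Ta
  obtain ⟨gb, Sb⟩ := Tb
  obtain ⟨ga', Sa'⟩ := Ta'
  obtain ⟨gb', Sb'⟩ := Tb'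
  obtain ⟨hga, hSa⟩ := ha
  obtain ⟨hgb, hSb⟩ := hb
  have hS := hSa.addE hSb
  cases hga <;> cases hgb <;> try simp [opCTy] at h
  rename_i B1 B2
  cases o <;> cases B1 <;> cases B2 <;> simp only [reduceCtorEq, Option.some.injEq] at h <;> subst h
  · exact ⟨_, rfl, .base, hS⟩
  · exact ⟨_, rfl, .base, hS.scaleE _⟩
  · exact ⟨_, rfl, .base, hS.scaleE _⟩

theorem exists_domC_of_prec {Ta Ta' Td : CTy} (ha : CTyPrec Ta Ta')
    (h : domC Ta = some Td) : ∃ Td', domC Ta' = some Td' ∧ CTyPrec Td Td' := by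
  obtain ⟨ga, Sa⟩ := Ta
  obtain ⟨ga', Sa'⟩ := Ta'
  obtain ⟨hga, -⟩ := ha
  cases hga with
  | arrow h1 h2 _ _ =>
    cases h
    exact ⟨_, rfl, h1, h2⟩
  | _ => simp [domC] at h

theorem exists_codC_of_prec {Ta Ta' Tc : CTy} (ha : CTyPrec Ta Ta')
    (h : codC Ta = some Tc) : ∃ Tc', codC Ta' = some Tc' ∧ CTyPrec Tc Tc' := by
  obtain ⟨ga, Sa⟩ := Ta
  obtain ⟨ga', Sa'⟩ := Ta'
  obtain ⟨hga, hSa⟩ := ha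
  cases hga with
  | arrow _ _ h3 h4 =>
    cases h
    exact ⟨_, rfl, h3, h4.addE hSa⟩
  | _ => simp [codC] at h

theorem exists_instC_of_prec {T T' Ti : CTy} {Sr Sr' : GEnv} (hT : CTyPrec T T')
    (hSr : precE Sr Sr') (h : instC T Sr = some Ti) :
    ∃ Ti', instC T' Sr' = some Ti' ∧ CTyPrec Ti Ti' := by
  obtain ⟨g, S⟩ := T
  obtain ⟨g', S'⟩ := T'
  obtain ⟨hg, hS⟩ := hT
  cases hg with
  | all hgg hSg =>
    cases h
    exact ⟨_, rfl, hgg.substT hSr, (hSg.substDVE hSr).addE hS⟩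
  | _ => simp [instC] at h

def TEnvPrec (Γ Γ' : GTEnv) : Prop :=
  ∀ x T, Γ x = some T → ∃ T', Γ' x = some T' ∧ CTyPrec T T'

theorem TEnvPrec.update {Γ Γ' : GTEnv} (h : TEnvPrec Γ Γ') (x : String) {T T' : CTy}
    (hT : CTyPrec T T') :
    TEnvPrec (Function.update Γ x (some T)) (Function.update Γ' x (some T')) := by
  intro y Ty hy
  rcases eq_or_ne y x with rfl | hyx
  · rw [Function.update_self, Option.some.injEq] at hy
    exact ⟨T', Function.update_self .., hy ▸ hT⟩
  · rw [Function.update_of_ne hyx] at hy ⊢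
    exact h y Ty hy

theorem Elab.exists_of_gPrec {Γ Γ' : GTEnv} {e1 e2 : GExpr} {e1' : CExpr} {T1 : CTy}
    (h1 : Elab Γ e1 e1' T1) (hp : GPrec e1 e2) (hΓ : TEnvPrec Γ Γ') :
    ∃ T2 e2', Elab Γ' e2 e2' T2 ∧ CTyPrec T1 T2 := by
  induction h1 generalizing Γ' e2 with
  | const hε =>
    cases hp
    exact ⟨_, _, .const hε, .refl _⟩
  | op _ _ hT iha ihb =>
    cases hp with | op hpa hpb =>
    obtain ⟨Ta', _, hea, hca⟩ := iha hpa hΓ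
    obtain ⟨Tb', _, heb, hcb⟩ := ihb hpb hΓ
    obtain ⟨T', hT', hcT⟩ := exists_opCTy_of_prec hca hcb hT
    exact ⟨T', _, .op hea heb hT', hcT⟩
  | var hx =>
    cases hp
    obtain ⟨T', hT', hcT⟩ := hΓ _ _ hx
    exact ⟨T', _, .var hT', hcT⟩
  | @lam _ x T1 _ _ T2 _ _ hε ih =>
    cases hp with | lam hT1 hpe =>
    obtain ⟨T2', _, he2, hc2⟩ := ih hpe (hΓ.update x hT1)
    have harr : CTyPrec (.arrow T1.1 T1.2 T2.1 T2.2, zeroE) (.arrow _ _ T2'.1 T2'.2, zeroE) :=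
      ⟨.arrow hT1.1 hT1.2 hc2.1 hc2.2, .refl _⟩
    obtain ⟨ε', hε'⟩ := exists_interC_of_prec harr harr hε
    exact ⟨_, _, .lam he2 hε', harr⟩
  | app _ _ hd hi hc iha ihb =>
    cases hp with | app hpa hpb =>
    obtain ⟨Ta', _, hea, hca⟩ := iha hpa hΓ
    obtain ⟨Tb', _, heb, hcb⟩ := ihb hpb hΓ
    obtain ⟨Td', hd', hcd⟩ := exists_domC_of_prec hca hd
    obtain ⟨_, hi'⟩ := exists_interC_of_prec hcb hcd hi
    obtain ⟨Tc', hc', hcc⟩ := exists_codC_of_prec hca hc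
    exact ⟨Tc', _, .app hea heb hd' hi' hc', hcc⟩
  | @tlam _ _ _ T r _ _ hε ih =>
    cases hp with | tlam hpe =>
    obtain ⟨T', _, he2, hc⟩ := ih hpe hΓ
    have hall : CTyPrec (.all r T.1 T.2, zeroE) (.all r T'.1 T'.2, zeroE) :=
      ⟨.all hc.1 hc.2, .refl _⟩
    obtain ⟨ε', hε'⟩ := exists_interC_of_prec hall hall hε
    exact ⟨_, _, .tlam he2 hε', hall⟩
  | tapp _ hi ih =>
    cases hp with | tapp hpe hSr =>
    obtain ⟨T2, _, he2, hc⟩ := ih hpe hΓ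
    obtain ⟨Ti', hi', hci⟩ := exists_instC_of_prec hc hSr hi
    exact ⟨Ti', _, .tapp he2 hi', hci⟩
  | ascr _ hi ih =>
    cases hp with | ascr hpe hT' =>
    obtain ⟨T2, _, he2, hc⟩ := ih hpe hΓ
    obtain ⟨_, hi'⟩ := exists_interC_of_prec hc hT' hi
    exact ⟨_, _, .ascr he2 hi', hT'⟩

end GS

open GS in
/-- Static Gradual Guarantee (Proposition 2): if e₁ ⊑ e₂ are closed GS
expressions and ⊢ e₁ : T₁, then there is T₂ with ⊢ e₂ : T₂ and T₁ ⊑ T₂. -/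
theorem static_gradual_guarantee
    (e1 e2 : GExpr) (hp : GPrec e1 e2)
    (e1' : CExpr) (T1 : CTy) (h1 : Elab emptyEnv e1 e1' T1) :
    ∃ T2 e2', Elab emptyEnv e2 e2' T2 ∧ CTyPrec T1 T2 :=
  h1.exists_of_gPrec hp fun _ _ h => nomatch h
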